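/- arXiv:1011.3058 — 4 statements merged into one kernel-verified Lean document; each statement's English description precedes it below -/
import Mathlib

section
/- If T is a finite tree with maximum degree d_max and depth D (rooted at some vertex), then the partition width of T satisfies PW(T) ≤ d_max · D. -/
open Finset
open scoped Classical

/-- A hierarchical partition of a finite vertex set: a rooted binary tree whose root is the
given set, whose leaves are singletons, and in which every internal node is the disjoint
union of its two (nonempty) children. -/
inductive HPart (α : Type*) [DecidableEq α] : Finset α → Type _
  | leaf (x : α) : HPart α {x}
  | node (s t : Finset α) (hst : Disjoint s t) (hs : s.Nonempty) (ht : t.Nonempty)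
      (l : HPart α s) (r : HPart α t) : HPart α (s ∪ t)

variable {α : Type*} [DecidableEq α]

/-- The number of edges of `G` between the disjoint sets `s` and `t`. -/
noncomputable def crossCount (G : SimpleGraph α) (s t : Finset α) : ℕ :=
  ((s ×ˢ t).filter fun p => G.Adj p.1 p.2).card

/-- The cost of a hierarchical partition: the weight of an internal node is the number of
edges between its two children, and the cost is the maximum over vertices of the sum of
node weights along the root-to-leaf path (computed recursively). -/
noncomputable def HPart.cost (G : SimpleGraph α) : {s : Finset α} → HPart α s → ℕ
  | _, .leaf _ => 0
  | _, .node s t _ _ _ l r => crossCount G s t + max (l.cost G) (r.cost G)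

/-- The partition width of (the subgraph of `G` induced by) a finite vertex set `s`:
the minimum cost over all hierarchical partitions of `s`. -/
noncomputable def PW (G : SimpleGraph α) (s : Finset α) : ℕ :=
  sInf {n | ∃ P : HPart α s, P.cost G = n}

/-!
Peel off the root `v`: the edges leaving `{v}` number at most `dmax`. Since the tree is acyclic,
no edge joins two of the branches hanging off the neighbours of `v`, so these branches can be
merged at no cost, and each has depth one less. Induction on the depth gives cost `dmax * D`.
-/

namespace SimpleGraph

variable {V : Type*} {G : SimpleGraph V}

theorem IsAcyclic.eq_of_adj_of_walk_avoiding (hG : G.IsAcyclic) {v c c' : V}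
    (hc : G.Adj v c) (hc' : G.Adj v c') (p : G.Walk c c') (hv : v ∉ p.support) : c = c' := by
  have hedge := (isBridge_iff_forall_walk_mem_edges.mp
    (isAcyclic_iff_forall_adj_isBridge.mp hG hc)) (Walk.cons hc' p.reverse)
  rw [Walk.edges_cons, List.mem_cons] at hedge
  rcases hedge with h | h
  · exact Sym2.congr_right.mp h
  · exact absurd (p.reverse.fst_mem_support_of_mem_edges h) (by simpa using hv)

theorem Walk.exists_adj_walk_avoiding {v x : V} (p : G.Walk v x) (hx : x ≠ v) :
    ∃ c, G.Adj v c ∧ ∃ q : G.Walk c x,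
      q.length < p.length ∧ q.support ⊆ p.support ∧ v ∉ q.support := by
  have hpath := p.bypass_isPath
  have hlen := p.length_bypass_le_length
  have hsupp := p.support_bypass_subset_support
  revert hpath hlen hsupp
  cases p.bypass with
  | nil => exact absurd rfl hx
  | cons hadj q =>
    intro hpath hlen hsupp
    rw [Walk.cons_isPath_iff] at hpath
    rw [Walk.length_cons] at hlen
    exact ⟨_, hadj, q, by omega, fun y hy => hsupp (List.mem_cons_of_mem _ hy), hpath.2⟩

theorem IsAcyclic.branch_eq_of_walk (hG : G.IsAcyclic) {v : V} {t : Finset V} (hvt : v ∉ t)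
    {b : V → V} (hb : ∀ x ∈ t, G.Adj v (b x)) (q : ∀ x ∈ t, G.Walk (b x) x)
    (hq : ∀ x hx, ∀ y ∈ (q x hx).support, y ∈ t) ⦃x y : V⦄ (p : G.Walk x y) (hx : x ∈ t)
    (hp : ∀ z ∈ p.support, z ∈ t) : b x = b y := by
  have hy : y ∈ t := hp y p.end_mem_support
  refine hG.eq_of_adj_of_walk_avoiding (hb x hx) (hb y hy)
    ((q x hx).append (p.append (q y hy).reverse)) fun hv => hvt ?_
  simp only [Walk.mem_support_append_iff, Walk.support_reverse, List.mem_reverse] at hv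
  rcases hv with h | h | h
  · exact hq x hx v h
  · exact hp v h
  · exact hq y hy v h

end SimpleGraph

open SimpleGraph

section CrossCount

variable {V : Type*} (G : SimpleGraph V)

theorem crossCount_eq_zero {s t : Finset V} (h : ∀ x ∈ s, ∀ y ∈ t, ¬ G.Adj x y) :
    crossCount G s t = 0 := by
  rw [crossCount, Finset.card_eq_zero, Finset.filter_eq_empty_iff]
  rintro ⟨x, y⟩ hxy
  rw [Finset.mem_product] at hxy
  exact h x hxy.1 y hxy.2

theorem crossCount_singleton_le [Fintype V] (v : V) (t : Finset V) :
    crossCount G {v} t ≤ (Finset.univ.filter fun w => G.Adj v w).card := by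
  refine Finset.card_le_card_of_injOn Prod.snd ?_ ?_
  · rintro ⟨a, b⟩ hp
    simp only [Finset.coe_filter, Finset.mem_product, Finset.mem_singleton,
      Set.mem_ofPred_eq] at hp
    simpa [← hp.1.1] using hp.2
  · rintro ⟨a, b⟩ ha ⟨a', b'⟩ hb (rfl : b = b')
    simp only [Finset.coe_filter, Finset.mem_product, Finset.mem_singleton,
      Set.mem_ofPred_eq] at ha hb
    rw [ha.1.1, hb.1.1]

end CrossCount

section HierarchicalPartition

variable (G : SimpleGraph α)

theorem PW_le_cost {s : Finset α} (P : HPart α s) : PW G s ≤ P.cost G :=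
  Nat.sInf_le ⟨P, rfl⟩

theorem exists_hpart_cost_le_of_fibers {β : Type*} [DecidableEq β] (f : α → β) (c : ℕ)
    {s : Finset α} (hs : s.Nonempty) (hf : ∀ x ∈ s, ∀ y ∈ s, G.Adj x y → f x = f y)
    (hfib : ∀ x ∈ s, ∃ P : HPart α (s.filter (f · = f x)), P.cost G ≤ c) :
    ∃ P : HPart α s, P.cost G ≤ c := by
  induction s using Finset.strongInduction with
  | H s ih =>
  obtain ⟨x, hx⟩ := hs
  set C := s.filter (f · = f x)
  set D := s.filter (¬ f · = f x)
  obtain ⟨PC, hPC⟩ : ∃ P : HPart α C, P.cost G ≤ c := hfib x hx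
  have hCD : C ∪ D = s := Finset.filter_union_filter_not_eq _ s
  rcases D.eq_empty_or_nonempty with hD | hD
  · rw [← hCD, hD, Finset.union_empty]
    exact ⟨PC, hPC⟩
  have hDs : D ⊂ s := Finset.filter_ssubset.mpr ⟨x, hx, not_not.mpr rfl⟩
  obtain ⟨PD, hPD⟩ : ∃ P : HPart α D, P.cost G ≤ c := by
    refine ih D hDs hD (fun y hy z hz => hf y (hDs.1 hy) z (hDs.1 hz)) fun y hy => ?_
    have hfiber : D.filter (f · = f y) = s.filter (f · = f y) := by
      rw [Finset.mem_filter] at hy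
      ext z
      simp only [D, Finset.mem_filter]
      constructor
      · exact fun h => ⟨h.1.1, h.2⟩
      · exact fun h => ⟨⟨h.1, h.2 ▸ hy.2⟩, h.2⟩
    rw [hfiber]
    exact hfib y (hDs.1 hy)
  have hcross : crossCount G C D = 0 := by
    refine crossCount_eq_zero G fun y hy z hz hyz => ?_
    rw [Finset.mem_filter] at hy hz
    exact hz.2 (hy.2 ▸ (hf y hy.1 z hz.1 hyz).symm)
  rw [← hCD]
  refine ⟨.node C D (Finset.disjoint_filter_filter_not s s _) ⟨x, ?_⟩ hD PC PD, ?_⟩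
  · simp [C, hx]
  · simp only [HPart.cost, hcross, zero_add]
    exact max_le hPC hPD

end HierarchicalPartition

def ReachesWithin (G : SimpleGraph α) (v : α) (s : Finset α) (n : ℕ) : Prop :=
  ∀ w ∈ s, ∃ p : G.Walk v w, p.length ≤ n ∧ ∀ y ∈ p.support, y ∈ s

namespace ReachesWithin

variable {G : SimpleGraph α} {v : α} {s : Finset α} {n : ℕ}

theorem exists_adj_walk (h : ReachesWithin G v s n) {x : α} (hx : x ∈ s.erase v) :
    ∃ c, G.Adj v c ∧ ∃ q : G.Walk c x, q.length < n ∧ ∀ y ∈ q.support, y ∈ s.erase v := by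
  obtain ⟨hxv, hxs⟩ := Finset.mem_erase.mp hx
  obtain ⟨p, hpn, hps⟩ := h x hxs
  obtain ⟨c, hvc, q, hqp, hqs, hvq⟩ := p.exists_adj_walk_avoiding hxv
  refine ⟨c, hvc, q, by omega, fun y hy => Finset.mem_erase.mpr ⟨?_, hps y (hqs hy)⟩⟩
  rintro rfl
  exact hvq hy

theorem eq_singleton (h : ReachesWithin G v s 0) (hv : v ∈ s) : s = {v} := by
  refine Finset.eq_singleton_iff_unique_mem.mpr ⟨hv, fun w hw => ?_⟩
  by_contra hwv
  obtain ⟨_, _, q, hq, _⟩ := h.exists_adj_walk (Finset.mem_erase.mpr ⟨hwv, hw⟩)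
  omega

end ReachesWithin

theorem exists_hpart_cost_le_succ [Fintype α] {G : SimpleGraph α} (hG : G.IsAcyclic)
    {dmax n : ℕ} (hdeg : ∀ v, (Finset.univ.filter fun w => G.Adj v w).card ≤ dmax)
    (ih : ∀ {s : Finset α} {v : α}, v ∈ s → ReachesWithin G v s n →
      ∃ P : HPart α s, P.cost G ≤ dmax * n)
    {s : Finset α} {v : α} (hv : v ∈ s) (hreach : ReachesWithin G v s (n + 1))
    (hrest : (s.erase v).Nonempty) :
    ∃ P : HPart α s, P.cost G ≤ dmax * (n + 1) := by
  set rest := s.erase v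
  -- `b x` is the neighbour of `v` whose branch contains `x`; acyclicity makes it well defined.
  choose! b hb q hq using fun x (hx : x ∈ rest) => hreach.exists_adj_walk hx
  have hb_eq := hG.branch_eq_of_walk (Finset.notMem_erase v s) hb q fun x hx => (hq x hx).2
  obtain ⟨PM, hPM⟩ : ∃ P : HPart α rest, P.cost G ≤ dmax * n := by
    refine exists_hpart_cost_le_of_fibers G b _ hrest
      (fun x hx y hy hxy => hb_eq hxy.toWalk hx ?_) fun x hx => ih (v := b x) ?_ ?_
    · simp only [Adj.toWalk, Walk.support_cons, Walk.support_nil, List.mem_cons,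
        List.not_mem_nil, or_false]
      rintro z (rfl | rfl) <;> assumption
    · have hbx : b x ∈ rest := (hq x hx).2 _ (q x hx).start_mem_support
      exact Finset.mem_filter.mpr ⟨hbx, hb_eq (q x hx) hbx (hq x hx).2⟩
    · intro w hw
      obtain ⟨hw, hwx⟩ := Finset.mem_filter.mp hw
      refine ⟨(q w hw).copy hwx rfl, ?_, fun y hy => ?_⟩
      · rw [Walk.length_copy]
        exact Nat.lt_succ_iff.mp (hq w hw).1
      rw [Walk.support_copy] at hy
      have hyr : y ∈ rest := (hq w hw).2 y hy
      refine Finset.mem_filter.mpr ⟨hyr, ?_⟩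
      rw [← hwx]
      exact hb_eq ((q w hw).dropUntil y hy) hyr fun z hz =>
        (hq w hw).2 z ((q w hw).support_dropUntil_subset_support hy hz)
  have hcross : crossCount G {v} rest ≤ dmax := (crossCount_singleton_le G v rest).trans (hdeg v)
  rw [← Finset.insert_erase hv, Finset.insert_eq]
  refine ⟨.node {v} rest (Finset.disjoint_singleton_left.mpr (Finset.notMem_erase v s))
    (Finset.singleton_nonempty v) hrest (.leaf v) PM, ?_⟩
  simp only [HPart.cost]
  rw [Nat.zero_max, mul_add_one]
  omega

theorem exists_hpart_cost_le_of_reachesWithin [Fintype α] {G : SimpleGraph α}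
    (hG : G.IsAcyclic) {dmax : ℕ}
    (hdeg : ∀ v, (Finset.univ.filter fun w => G.Adj v w).card ≤ dmax) (n : ℕ) :
    ∀ {s : Finset α} {v : α}, v ∈ s → ReachesWithin G v s n →
      ∃ P : HPart α s, P.cost G ≤ dmax * n := by
  induction n with
  | zero =>
    intro s v hv hreach
    rw [hreach.eq_singleton hv]
    exact ⟨.leaf v, le_rfl⟩
  | succ n ih =>
    intro s v hv hreach
    rcases (s.erase v).eq_empty_or_nonempty with hrest | hrest
    · obtain rfl : s = {v} := ((Finset.erase_eq_empty_iff s v).mp hrest).resolve_left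
        (Finset.ne_empty_of_mem hv)
      exact ⟨.leaf v, Nat.zero_le _⟩
    · exact exists_hpart_cost_le_succ hG hdeg ih hv hreach hrest

/-- If `T` is a finite tree with maximum degree `d_max` and depth `D`
(rooted at some vertex `r`, i.e. every vertex is within distance `D` of `r`), then
`PW(T) ≤ d_max · D`. -/
theorem stmt_2 {α : Type*} [Fintype α] [DecidableEq α] (T : SimpleGraph α)
    (hT : T.IsTree) (dmax D : ℕ) (r : α)
    (hdeg : ∀ v, (Finset.univ.filter fun w => T.Adj v w).card ≤ dmax)
    (hdepth : ∀ v, T.dist r v ≤ D) :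
    PW T Finset.univ ≤ dmax * D := by
  have hreach : ReachesWithin T r Finset.univ D := fun w _ => by
    obtain ⟨p, hp⟩ := hT.connected.exists_walk_length_eq_dist r w
    exact ⟨p, hp ▸ hdepth w, fun y _ => Finset.mem_univ y⟩
  obtain ⟨P, hP⟩ := exists_hpart_cost_le_of_reachesWithin hT.isAcyclic hdeg D
    (Finset.mem_univ r) hreach
  exact (PW_le_cost T P).trans hP
end

section
/- In the random cluster model on a finite 2d-regular graph G=(V,E) with parameters p = 1 − e^{−β} and q, the unnormalized weight w(A) = p^{|A|}(1−p)^{|E\A|} q^{c(A)} of a configuration A ⊆ E can be rewritten as w(A) = q^{c̃(A)} · e^{−e_dis·|V\V(A)|} · e^{−e_ord·|V(A)|} · e^{−κ·‖δA‖}, where e_dis = dβ − log q, e_ord = −d·log(1 − e^{−β}), κ = (1/2)·log(e^β − 1), and ‖δA‖ = |δ₁A| + 2|δ₂A|. -/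
open Finset
open scoped Classical

variable {V : Type*} [Fintype V] [DecidableEq V]

/-- The set of vertices incident to at least one edge of `A`. -/
noncomputable def vertSet (A : Finset (Sym2 V)) : Finset V :=
  Finset.univ.filter fun v => ∃ e ∈ A, v ∈ e

/-- `c(A)`: the number of connected components of the graph `(V, A)` (isolated vertices
count as components). -/
noncomputable def compCount (A : Finset (Sym2 V)) : ℕ :=
  Nat.card (SimpleGraph.fromEdgeSet (↑A : Set (Sym2 V))).ConnectedComponent

/-- `c̃(A)`: the number of connected components of the graph `(V(A), A)`. -/
noncomputable def compCount' (A : Finset (Sym2 V)) : ℕ :=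
  Nat.card ((SimpleGraph.fromEdgeSet (↑A : Set (Sym2 V))).induce
    (↑(vertSet A) : Set V)).ConnectedComponent

/-- `δₖA`: the set of edges of `E \ A` having exactly `k` endpoints in `V(A)`. -/
noncomputable def deltaK (G : SimpleGraph V) (A : Finset (Sym2 V)) (k : ℕ) :
    Finset (Sym2 V) :=
  Finset.univ.filter fun e : Sym2 V =>
    e ∈ G.edgeSet ∧ e ∉ A ∧ ((vertSet A).filter fun v => v ∈ e).card = k

/-- The degree of a vertex. -/
noncomputable def deg (G : SimpleGraph V) (v : V) : ℕ :=
  (Finset.univ.filter fun w => G.Adj v w).card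


/-!
Vertices outside `V(A)` are isolated in `(V, A)`, and a walk of `(V, A)` starting in `V(A)` stays
in `V(A)`; hence `c(A) = c̃(A) + |V \ V(A)|`. Counting incidences between `V(A)` and `E`, where
edges of `A` meet `V(A)` twice and the other edges `0`, `1` or `2` times, gives
`2d|V(A)| = 2|A| + ‖δA‖`, and `|E| = d|V|` by the handshake lemma. Writing every factor as an
exponential (`p = e^{log p}`, `1 - p = e^{-β}`, `log (e^β - 1) = log p + β`), the two sides are
`q^{c̃(A)}` times exponentials whose exponents agree by these two linear relations.
-/

namespace RandomCluster

/-- `‖δA‖ = |δ₁A| + 2|δ₂A|`. -/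
noncomputable def boundaryNorm (G : SimpleGraph V) (A : Finset (Sym2 V)) : ℕ :=
  (deltaK G A 1).card + 2 * (deltaK G A 2).card

variable {A : Finset (Sym2 V)}

local notation "H" A => SimpleGraph.fromEdgeSet (↑A : Set (Sym2 V))

lemma mem_vertSet_iff {v : V} : v ∈ vertSet A ↔ ∃ e ∈ A, v ∈ e := by
  simp [vertSet]

lemma mem_vertSet_of_adj {x y : V} (h : (H A).Adj x y) : x ∈ vertSet A := by
  rw [SimpleGraph.fromEdgeSet_adj] at h
  exact mem_vertSet_iff.2 ⟨s(x, y), by exact_mod_cast h.1, Sym2.mem_mk_left x y⟩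

lemma eq_of_reachable_of_notMem_vertSet {v w : V} (hv : v ∉ vertSet A)
    (h : (H A).Reachable v w) : v = w := by
  obtain ⟨_ | ⟨hadj, _⟩⟩ := h
  · rfl
  · exact absurd (mem_vertSet_of_adj hadj) hv

lemma mem_vertSet_of_mem_support {u w : V} (p : (H A).Walk u w)
    (hu : u ∈ vertSet A) :
    ∀ x ∈ p.support, x ∈ vertSet A := by
  induction p with
  | nil => simpa using hu
  | cons hadj p ih =>
    simp only [SimpleGraph.Walk.support_cons, List.mem_cons, forall_eq_or_imp]
    exact ⟨hu, ih (mem_vertSet_of_adj hadj.symm)⟩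

lemma reachable_induce_vertSet {u w : V} (h : (H A).Reachable u w)
    (hu : u ∈ vertSet A) (hw : w ∈ vertSet A) :
    ((H A).induce (↑(vertSet A) : Set V)).Reachable ⟨u, hu⟩ ⟨w, hw⟩ := by
  obtain ⟨p⟩ := h
  exact ⟨p.induce _ (mem_vertSet_of_mem_support p hu)⟩

variable (A) in
lemma compCount_eq_compCount'_add_card_sdiff_vertSet :
    compCount A = compCount' A + (Finset.univ \ vertSet A).card := by
  set s : Set V := ↑(vertSet A)
  let f : ((H A).induce s).ConnectedComponent ⊕ ↥(Finset.univ \ vertSet A) →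
      (H A).ConnectedComponent :=
    Sum.elim (fun c => c.map (SimpleGraph.Embedding.induce s).toHom)
      (fun v => (H A).connectedComponentMk v.1)
  have hcompl (v : ↥(Finset.univ \ vertSet A)) : v.1 ∉ vertSet A :=
    (Finset.mem_sdiff.1 v.2).2
  have hinj : Function.Injective f := by
    refine Function.Injective.sumElim ?_ ?_ ?_
    · rintro ⟨u⟩ ⟨u'⟩ h
      exact SimpleGraph.ConnectedComponent.sound
        (reachable_induce_vertSet (SimpleGraph.ConnectedComponent.exact h) u.2 u'.2)
    · intro v v' h
      exact Subtype.ext (eq_of_reachable_of_notMem_vertSet (hcompl v)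
        (SimpleGraph.ConnectedComponent.exact h))
    · rintro ⟨u⟩ v h
      have := eq_of_reachable_of_notMem_vertSet (hcompl v)
        (SimpleGraph.ConnectedComponent.exact h).symm
      exact hcompl v (this ▸ u.2)
  have hsurj : Function.Surjective f := by
    rintro ⟨v⟩
    by_cases hv : v ∈ vertSet A
    · exact ⟨Sum.inl ((H A).induce s |>.connectedComponentMk ⟨v, hv⟩), rfl⟩
    · exact ⟨Sum.inr ⟨v, by simpa using hv⟩, rfl⟩
  rw [compCount, compCount', ← Nat.card_eq_finsetCard, ← Nat.card_sum]
  exact (Nat.card_congr (Equiv.ofBijective f ⟨hinj, hsurj⟩)).symm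

lemma deg_eq_degree {α : Type*} [Fintype α] (G : SimpleGraph α) (v : α) :
    deg G v = G.degree v := by
  rw [deg, ← SimpleGraph.card_neighborFinset_eq_degree]
  congr 1
  ext w
  simp

lemma degree_eq_card_filter_mem {α : Type*} [Fintype α] (G : SimpleGraph α) (v : α) :
    G.degree v = (G.edgeFinset.filter (v ∈ ·)).card := by
  rw [← SimpleGraph.card_incidenceFinset_eq_degree]
  congr 1
  ext e
  simp [SimpleGraph.incidenceSet, and_comm]

lemma card_filter_mem_le_two {α : Type*} [DecidableEq α] (S : Finset α) (e : Sym2 α) :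
    (S.filter (· ∈ e)).card ≤ 2 := by
  induction e with
  | _ x y =>
    calc (S.filter (· ∈ s(x, y))).card ≤ ({x, y} : Finset α).card :=
          Finset.card_le_card fun v hv => by simpa using (Finset.mem_filter.1 hv).2
      _ ≤ 2 := Finset.card_le_two

lemma card_filter_mem_vertSet_of_mem {e : Sym2 V} (he : e ∈ A) (hd : ¬ e.IsDiag) :
    ((vertSet A).filter (· ∈ e)).card = 2 := by
  induction e with
  | _ x y =>
    have hfilter : (vertSet A).filter (· ∈ s(x, y)) = {x, y} := by
      ext v
      simp only [Finset.mem_filter, Sym2.mem_iff, Finset.mem_insert, Finset.mem_singleton]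
      exact ⟨And.right, fun h => ⟨mem_vertSet_iff.2 ⟨s(x, y), he, by simpa using h⟩, h⟩⟩
    rw [hfilter, Finset.card_pair (by simpa using hd)]

variable (A) in
lemma deltaK_eq_filter (G : SimpleGraph V) (k : ℕ) :
    deltaK G A k =
      (G.edgeFinset \ A).filter fun e => ((vertSet A).filter (· ∈ e)).card = k := by
  ext e
  simp [deltaK, and_assoc]

variable (A) in
lemma sum_card_filter_mem_vertSet_sdiff (G : SimpleGraph V) :
    ∑ e ∈ G.edgeFinset \ A, ((vertSet A).filter (· ∈ e)).card = boundaryNorm G A := by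
  set f : Sym2 V → ℕ := fun e => ((vertSet A).filter (· ∈ e)).card
  have hmaps : ∀ e ∈ G.edgeFinset \ A, f e ∈ Finset.range 3 := fun e _ =>
    Finset.mem_range.2 (Nat.lt_succ_of_le (card_filter_mem_le_two _ e))
  have hfiber (k : ℕ) :
      ∑ e ∈ (G.edgeFinset \ A).filter (f · = k), f e = (deltaK G A k).card * k := by
    rw [Finset.sum_congr rfl fun e he => (Finset.mem_filter.1 he).2, Finset.sum_const,
      deltaK_eq_filter, smul_eq_mul]
  rw [← Finset.sum_fiberwise_of_maps_to hmaps, Finset.sum_range_succ, Finset.sum_range_succ,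
    Finset.sum_range_one, hfiber, hfiber, hfiber, boundaryNorm]
  ring

lemma sum_deg_vertSet (G : SimpleGraph V) (hA : ∀ e ∈ A, e ∈ G.edgeSet) :
    ∑ v ∈ vertSet A, deg G v = 2 * A.card + boundaryNorm G A := by
  have hAE : A ⊆ G.edgeFinset := fun e he => SimpleGraph.mem_edgeFinset.2 (hA e he)
  calc ∑ v ∈ vertSet A, deg G v
      = ∑ e ∈ G.edgeFinset, ((vertSet A).filter (· ∈ e)).card := by
        simp only [deg_eq_degree, degree_eq_card_filter_mem]
        convert Finset.sum_card_bipartiteAbove_eq_sum_card_bipartiteBelow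
          (fun (v : V) (e : Sym2 V) => v ∈ e) <;>
          ext <;> simp [Finset.bipartiteAbove, Finset.bipartiteBelow]
    _ = ∑ e ∈ A, ((vertSet A).filter (· ∈ e)).card
          + ∑ e ∈ G.edgeFinset \ A, ((vertSet A).filter (· ∈ e)).card := by
        rw [add_comm, Finset.sum_sdiff hAE]
    _ = 2 * A.card + boundaryNorm G A := by
        rw [sum_card_filter_mem_vertSet_sdiff, Finset.sum_congr rfl fun e he =>
          card_filter_mem_vertSet_of_mem he (G.not_isDiag_of_mem_edgeSet (hA e he)),
          Finset.sum_const, smul_eq_mul, mul_comm]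

lemma card_edgeFinset_of_deg_eq {α : Type*} [Fintype α] (G : SimpleGraph α) {d : ℕ}
    (hreg : ∀ v, deg G v = 2 * d) : G.edgeFinset.card = d * Fintype.card α := by
  have := G.sum_degrees_eq_twice_card_edges
  simp only [← deg_eq_degree, hreg, Finset.sum_const, Finset.card_univ, smul_eq_mul] at this
  linarith

lemma two_mul_card_vertSet_of_deg_eq (G : SimpleGraph V) {d : ℕ} (hreg : ∀ v, deg G v = 2 * d)
    (hA : ∀ e ∈ A, e ∈ G.edgeSet) :
    2 * d * (vertSet A).card = 2 * A.card + boundaryNorm G A := by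
  rw [← sum_deg_vertSet G hA, Finset.sum_congr rfl fun v _ => hreg v, Finset.sum_const,
    smul_eq_mul, mul_comm]

lemma weight_eq_mul_exp {d a e n m k c : ℕ} {β q p : ℝ} (hβ : 0 < β) (hq : 0 < q)
    (hp : p = 1 - Real.exp (-β)) (he : e = d * (n + m)) (hk : 2 * d * m = 2 * a + k) :
    p ^ a * (1 - p) ^ (e - a) * q ^ (c + n)
      = q ^ c * Real.exp (-(d * β - Real.log q) * n) *
        Real.exp (-(-(d : ℝ) * Real.log (1 - Real.exp (-β))) * m) *
        Real.exp (-((1 : ℝ) / 2 * Real.log (Real.exp β - 1)) * k) := by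
  have hp0 : 0 < p := by
    rw [hp, sub_pos, Real.exp_lt_one_iff]
    linarith
  have hlog : Real.log (Real.exp β - 1) = Real.log p + β := by
    rw [← Real.log_exp β, ← Real.log_mul hp0.ne' (Real.exp_pos β).ne', hp, sub_mul,
      ← Real.exp_add, Real.log_exp]
    simp
  have hpa : p ^ a = Real.exp (a * Real.log p) := by rw [Real.exp_nat_mul, Real.exp_log hp0]
  have hqn : q ^ n = Real.exp (n * Real.log q) := by rw [Real.exp_nat_mul, Real.exp_log hq]
  have hea : (1 - p) ^ (e - a) = Real.exp ((e - a : ℝ) * -β) := by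
    have hae : a ≤ e := by rw [he]; nlinarith
    rw [← Nat.cast_sub hae, Real.exp_nat_mul, hp, sub_sub_cancel]
  have hk' : (2 * d * m : ℝ) = 2 * a + k := by exact_mod_cast hk
  have he' : (e : ℝ) = d * (n + m) := by exact_mod_cast he
  rw [← hp, hlog, pow_add, hpa, hqn, hea]
  calc _ = q ^ c * Real.exp (a * Real.log p + (e - a) * -β + n * Real.log q) := by
        rw [Real.exp_add, Real.exp_add]; ring
    _ = q ^ c * Real.exp (-(d * β - Real.log q) * n + -(-d * Real.log p) * m
          + -(1 / 2 * (Real.log p + β)) * k) := by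
        congr 2
        linear_combination (-(Real.log p + β) / 2) * hk' - β * he'
    _ = _ := by rw [Real.exp_add, Real.exp_add]; ring

end RandomCluster

open RandomCluster

/-- the random-cluster weight
`w(A) = p^{|A|}(1-p)^{|E∖A|} q^{c(A)}` (with `p = 1 - e^{-β}`) of a configuration
`A ⊆ E` on a finite `2d`-regular graph can be rewritten as
`w(A) = q^{c̃(A)} e^{-e_dis|V∖V(A)|} e^{-e_ord|V(A)|} e^{-κ‖δA‖}`, where
`e_dis = dβ - log q`, `e_ord = -d·log(1-e^{-β})`, `κ = ½·log(e^β - 1)`,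
and `‖δA‖ = |δ₁A| + 2|δ₂A|`. -/
theorem stmt_9 {V : Type*} [Fintype V] [DecidableEq V] (G : SimpleGraph V) (d : ℕ)
    (hreg : ∀ v, deg G v = 2 * d)
    (A : Finset (Sym2 V)) (hA : ∀ e ∈ A, e ∈ G.edgeSet)
    (E : Finset (Sym2 V)) (hE : E = Finset.univ.filter fun e => e ∈ G.edgeSet)
    (β q : ℝ) (hβ : 0 < β) (hq : 0 < q) (p : ℝ) (hp : p = 1 - Real.exp (-β)) :
    p ^ A.card * (1 - p) ^ (E.card - A.card) * q ^ compCount A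
      = q ^ compCount' A *
        Real.exp (-(d * β - Real.log q) * (Finset.univ \ vertSet A).card) *
        Real.exp (-(-(d : ℝ) * Real.log (1 - Real.exp (-β))) * (vertSet A).card) *
        Real.exp (-((1 : ℝ) / 2 * Real.log (Real.exp β - 1)) *
          ((deltaK G A 1).card + 2 * (deltaK G A 2).card : ℕ)) := by
  have hcardE : E.card = d * ((Finset.univ \ vertSet A).card + (vertSet A).card) := by
    rw [Finset.card_sdiff_add_card_eq_card (Finset.subset_univ _), Finset.card_univ,
      ← card_edgeFinset_of_deg_eq G hreg, hE]
    congr 1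
    ext e
    simp
  rw [compCount_eq_compCount'_add_card_sdiff_vertSet]
  exact weight_eq_mul_exp hβ hq hp hcardE (two_mul_card_vertSet_of_deg_eq G hreg hA)
end

section
/- Let P be the transition matrix of the Swendsen-Wang chain for the q-state Potts model at inverse temperature β on a finite graph G=(V,E), and let G₀=(V,E₀) with E₀ ⊆ E and E₁ = E \ E₀. Then for all spin configurations σ, σ': P_G(σ,σ') ≥ e^{−β|E₁|}·P_{G₀}(σ,σ'), and hence P²_G(σ,σ') ≥ e^{−2β|E₁|}·P²_{G₀}(σ,σ'). Moreover the Gibbs measures satisfy e^{−β|E₁|}·μ_{G₀}(σ) ≤ μ_G(σ) ≤ e^{β|E₁|}·μ_{G₀}(σ), and consequently the inverse spectral gaps satisfy τ̃(P²_G) ≤ e^{5β|E₁|}·τ̃(P²_{G₀}). -/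
/-!
Every quantity in `τ̃` is a quadratic form `½ ∑ₛ ∑ₜ (g s - g t)² w s t` with nonnegative
weights, so pointwise bounds `μ_G ≤ a μ_{G₀}`, `b μ_{G₀} ≤ μ_G` and `c P²_{G₀} ≤ P²_G` give
`Var_G ≤ a² Var_{G₀}` and `b c 𝓔_{G₀} ≤ 𝓔_G`, hence `τ̃(P²_G) ≤ a²/(b c) · τ̃(P²_{G₀})`.
Removing the edges of `E₁` changes the Hamiltonian by at most `|E₁|`, which gives
`a = e^{β|E₁|}` and `b = e^{-β|E₁|}`. A Swendsen–Wang step on `G` that deletes every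
monochromatic edge of `E₁` is distributed as a step on `G₀`, and that event has probability at
least `e^{-β|E₁|}`; squaring gives `c = e^{-2β|E₁|}`.
-/

open Finset
open scoped Classical

variable {V : Type*} [Fintype V] [DecidableEq V]

/-- The monochromatic edges of the spin configuration `σ`. -/
noncomputable def monoEdges (G : SimpleGraph V) {q : ℕ} (σ : V → Fin q) :
    Finset (Sym2 V) :=
  Finset.univ.filter fun e : Sym2 V => e ∈ G.edgeSet ∧ ∀ x ∈ e, ∀ y ∈ e, σ x = σ y

/-- The Potts Hamiltonian: the number of non-monochromatic edges. -/
noncomputable def pottsH (G : SimpleGraph V) {q : ℕ} (σ : V → Fin q) : ℕ :=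
  (Finset.univ.filter fun e : Sym2 V =>
    e ∈ G.edgeSet ∧ ¬ ∀ x ∈ e, ∀ y ∈ e, σ x = σ y).card

/-- The Potts Gibbs measure `μ_G(σ) = e^{-βH_G(σ)}/Z_G`. -/
noncomputable def pottsMeasure (G : SimpleGraph V) (q : ℕ) (β : ℝ) (σ : V → Fin q) : ℝ :=
  Real.exp (-β * pottsH G σ) / ∑ σ' : V → Fin q, Real.exp (-β * pottsH G σ')

/-- The Swendsen–Wang transition kernel: delete each monochromatic edge independently with
probability `e^{-β}`, then recolor each connected component of the retained edge set
uniformly at random. -/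
noncomputable def swKernel (G : SimpleGraph V) (q : ℕ) (β : ℝ) (σ σ' : V → Fin q) : ℝ :=
  ∑ A ∈ (monoEdges G σ).powerset,
    (1 - Real.exp (-β)) ^ A.card * Real.exp (-β) ^ ((monoEdges G σ).card - A.card) *
      ∏ c : (SimpleGraph.fromEdgeSet (↑A : Set (Sym2 V))).ConnectedComponent,
        ((1 : ℝ) / q *
          ∑ k : Fin q, ∏ v ∈ Finset.univ.filter (fun v : V =>
              (SimpleGraph.fromEdgeSet (↑A : Set (Sym2 V))).connectedComponentMk v = c),
            (if σ' v = k then (1 : ℝ) else 0))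

/-- The Swendsen–Wang transition matrix. -/
noncomputable def swMat (G : SimpleGraph V) (q : ℕ) (β : ℝ) :
    Matrix (V → Fin q) (V → Fin q) ℝ :=
  Matrix.of fun σ σ' => swKernel G q β σ σ'

/-- The variance of `g` with respect to `μ`. -/
noncomputable def mcVar {Ω : Type*} [Fintype Ω] (μ g : Ω → ℝ) : ℝ :=
  (1 / 2) * ∑ s, ∑ t, (g s - g t) ^ 2 * (μ s * μ t)

/-- The Dirichlet form of `g` for the chain `P` with measure `μ`. -/
noncomputable def mcDir {Ω : Type*} [Fintype Ω] (μ : Ω → ℝ) (P : Matrix Ω Ω ℝ)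
    (g : Ω → ℝ) : ℝ :=
  (1 / 2) * ∑ s, ∑ t, (g s - g t) ^ 2 * (μ s * P s t)

/-- The inverse spectral gap `τ̃(P) = sup_{Var g > 0} Var(g)/E(g,g)`. -/
noncomputable def tauTilde {Ω : Type*} [Fintype Ω] (μ : Ω → ℝ) (P : Matrix Ω Ω ℝ) : ℝ :=
  ⨆ g : {g : Ω → ℝ // mcVar μ g ≠ 0}, mcVar μ g.1 / mcDir μ P g.1

section MarkovChain

variable {Ω : Type*} [Fintype Ω]

theorem half_sum_sq_sub_mul_le {w w' : Ω → Ω → ℝ} {c : ℝ} (h : ∀ s t, w s t ≤ c * w' s t)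
    (g : Ω → ℝ) :
    (1 / 2) * ∑ s, ∑ t, (g s - g t) ^ 2 * w s t
      ≤ c * ((1 / 2) * ∑ s, ∑ t, (g s - g t) ^ 2 * w' s t) := by
  calc (1 / 2) * ∑ s, ∑ t, (g s - g t) ^ 2 * w s t
      ≤ (1 / 2) * ∑ s, ∑ t, (g s - g t) ^ 2 * (c * w' s t) := by
        gcongr with s _ t _
        exact h s t
    _ = _ := by
        simp_rw [mul_left_comm _ c, ← Finset.mul_sum]
        ring

theorem mcVar_nonneg {μ : Ω → ℝ} (hμ : ∀ s, 0 ≤ μ s) (g : Ω → ℝ) : 0 ≤ mcVar μ g := by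
  unfold mcVar
  exact mul_nonneg (by norm_num) <| Finset.sum_nonneg fun s _ => Finset.sum_nonneg fun t _ =>
    mul_nonneg (sq_nonneg _) (mul_nonneg (hμ s) (hμ t))

theorem mcDir_nonneg {μ : Ω → ℝ} {P : Matrix Ω Ω ℝ} (hμ : ∀ s, 0 ≤ μ s)
    (hP : ∀ s t, 0 ≤ P s t) (g : Ω → ℝ) : 0 ≤ mcDir μ P g := by
  unfold mcDir
  exact mul_nonneg (by norm_num) <| Finset.sum_nonneg fun s _ => Finset.sum_nonneg fun t _ =>
    mul_nonneg (sq_nonneg _) (mul_nonneg (hμ s) (hP s t))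

theorem exists_mcVar_le_mul_mcDir {μ : Ω → ℝ} {P : Matrix Ω Ω ℝ} (hμ : ∀ s, 0 ≤ μ s)
    (hP : ∀ s t, 0 < P s t) : ∃ C, ∀ g, mcVar μ g ≤ C * mcDir μ P g := by
  refine ⟨∑ s, ∑ t, μ t / P s t, fun g => half_sum_sq_sub_mul_le (fun s t => ?_) g⟩
  have hC : μ t / P s t ≤ ∑ s, ∑ t, μ t / P s t :=
    (Finset.single_le_sum (fun t _ => div_nonneg (hμ t) (hP s t).le) (Finset.mem_univ t)).trans
      (Finset.single_le_sum (f := fun s => ∑ t, μ t / P s t)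
        (fun s _ => Finset.sum_nonneg fun t _ => div_nonneg (hμ t) (hP s t).le)
        (Finset.mem_univ s))
  calc μ s * μ t ≤ μ s * ((∑ s, ∑ t, μ t / P s t) * P s t) := by
        gcongr
        · exact hμ s
        · exact (div_le_iff₀ (hP s t)).mp hC
    _ = _ := by ring

theorem tauTilde_le_of_mcVar_le {μ : Ω → ℝ} {P : Matrix Ω Ω ℝ} {K : ℝ} (hμ : ∀ s, 0 ≤ μ s)
    (hP : ∀ s t, 0 ≤ P s t) (hK : 0 ≤ K) (h : ∀ g, mcVar μ g ≤ K * mcDir μ P g) :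
    tauTilde μ P ≤ K :=
  Real.iSup_le (fun g => div_le_of_le_mul₀ (mcDir_nonneg hμ hP g.1) hK (h g.1)) hK

theorem mcVar_le_tauTilde_mul_mcDir {μ : Ω → ℝ} {P : Matrix Ω Ω ℝ} (hμ : ∀ s, 0 ≤ μ s)
    (hP : ∀ s t, 0 < P s t) (g : Ω → ℝ) : mcVar μ g ≤ tauTilde μ P * mcDir μ P g := by
  obtain ⟨C, hC⟩ := exists_mcVar_le_mul_mcDir hμ hP
  have hDir : ∀ g, 0 ≤ mcDir μ P g := mcDir_nonneg hμ fun s t => (hP s t).le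
  have hτ : 0 ≤ tauTilde μ P :=
    Real.iSup_nonneg fun g => div_nonneg (mcVar_nonneg hμ g.1) (hDir g.1)
  rcases (mcVar_nonneg hμ g).eq_or_lt with hVar | hVar
  · rw [← hVar]
    exact mul_nonneg hτ (hDir g)
  have hDir_pos : 0 < mcDir μ P g := by
    by_contra! h
    have : C * mcDir μ P g = 0 := by rw [le_antisymm h (hDir g), mul_zero]
    linarith [hC g]
  have hbdd : BddAbove (Set.range fun g : {g : Ω → ℝ // mcVar μ g ≠ 0} =>
      mcVar μ g.1 / mcDir μ P g.1) := by
    refine ⟨max C 0, ?_⟩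
    rintro _ ⟨g, rfl⟩
    exact div_le_of_le_mul₀ (hDir g.1) (le_max_right C 0)
      ((hC g.1).trans (by gcongr; exacts [hDir g.1, le_max_left C 0]))
  rw [← div_le_iff₀ hDir_pos]
  exact le_ciSup hbdd ⟨g, hVar.ne'⟩

theorem tauTilde_le_of_comparison {μ ν : Ω → ℝ} {P Q : Matrix Ω Ω ℝ} {a b c : ℝ}
    (hb : 0 < b) (hc : 0 < c) (hμ : ∀ s, 0 ≤ μ s) (hν : ∀ s, 0 ≤ ν s)
    (hP : ∀ s t, 0 ≤ P s t) (hQ : ∀ s t, 0 < Q s t) (hμa : ∀ s, μ s ≤ a * ν s)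
    (hμb : ∀ s, b * ν s ≤ μ s) (hPQ : ∀ s t, c * Q s t ≤ P s t) :
    tauTilde μ P ≤ a ^ 2 / (b * c) * tauTilde ν Q := by
  have hτ : 0 ≤ tauTilde ν Q := Real.iSup_nonneg fun g =>
    div_nonneg (mcVar_nonneg hν g.1) (mcDir_nonneg hν (fun s t => (hQ s t).le) g.1)
  refine tauTilde_le_of_mcVar_le hμ hP (by positivity) fun g => ?_
  have hVar : mcVar μ g ≤ a ^ 2 * mcVar ν g := half_sum_sq_sub_mul_le (fun s t => by
    calc μ s * μ t ≤ (a * ν s) * (a * ν t) :=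
          mul_le_mul (hμa s) (hμa t) (hμ t) ((hμ s).trans (hμa s))
      _ = a ^ 2 * (ν s * ν t) := by ring) g
  have hDir : mcDir ν Q g ≤ (b * c)⁻¹ * mcDir μ P g := half_sum_sq_sub_mul_le (fun s t => by
    rw [← div_eq_inv_mul, le_div_iff₀ (by positivity)]
    calc ν s * Q s t * (b * c) = (b * ν s) * (c * Q s t) := by ring
      _ ≤ μ s * P s t :=
          mul_le_mul (hμb s) (hPQ s t) (mul_nonneg hc.le (hQ s t).le) (hμ s)) g
  calc mcVar μ g ≤ a ^ 2 * (tauTilde ν Q * mcDir ν Q g) :=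
        hVar.trans (by gcongr; exact mcVar_le_tauTilde_mul_mcDir hν hQ g)
    _ ≤ a ^ 2 * (tauTilde ν Q * ((b * c)⁻¹ * mcDir μ P g)) := by gcongr
    _ = a ^ 2 / (b * c) * tauTilde ν Q * mcDir μ P g := by ring

end MarkovChain

theorem Matrix.mul_apply_pos {n : Type*} [Fintype n] [Nonempty n] {P Q : Matrix n n ℝ}
    (hP : ∀ s t, 0 < P s t) (hQ : ∀ s t, 0 < Q s t) (s t : n) : 0 < (P * Q) s t :=
  Finset.sum_pos (fun u _ => mul_pos (hP s u) (hQ u t)) Finset.univ_nonempty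

theorem Matrix.sq_mul_mul_apply_le {n : Type*} [Fintype n] {P Q : Matrix n n ℝ} {c : ℝ}
    (hc : 0 ≤ c) (hQ : ∀ s t, 0 ≤ Q s t) (h : ∀ s t, c * Q s t ≤ P s t) (s t : n) :
    c ^ 2 * (Q * Q) s t ≤ (P * P) s t := by
  simp only [Matrix.mul_apply, Finset.mul_sum]
  refine Finset.sum_le_sum fun u _ => ?_
  calc c ^ 2 * (Q s u * Q u t) = (c * Q s u) * (c * Q u t) := by ring
    _ ≤ P s u * P u t :=
        mul_le_mul (h s u) (h u t) (mul_nonneg hc (hQ u t)) ((mul_nonneg hc (hQ s u)).trans (h s u))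

section Percolation

variable {α : Type*}

noncomputable def percolationExpect (x : ℝ) (M : Finset α) (f : Finset α → ℝ) : ℝ :=
  ∑ A ∈ M.powerset, (1 - x) ^ A.card * x ^ (M.card - A.card) * f A

variable {x : ℝ} {f : Finset α → ℝ}

theorem percolationExpect_term_nonneg (hx₀ : 0 ≤ x) (hx₁ : x ≤ 1) (hf : ∀ A, 0 ≤ f A)
    (M A : Finset α) : 0 ≤ (1 - x) ^ A.card * x ^ (M.card - A.card) * f A :=
  mul_nonneg (mul_nonneg (pow_nonneg (by linarith) _) (pow_nonneg hx₀ _)) (hf A)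

theorem percolationExpect_nonneg (hx₀ : 0 ≤ x) (hx₁ : x ≤ 1) (hf : ∀ A, 0 ≤ f A)
    (M : Finset α) : 0 ≤ percolationExpect x M f :=
  Finset.sum_nonneg fun A _ => percolationExpect_term_nonneg hx₀ hx₁ hf M A

theorem percolationExpect_pos (hx₀ : 0 < x) (hx₁ : x ≤ 1) (hf : ∀ A, 0 ≤ f A) (hf₀ : 0 < f ∅)
    (M : Finset α) : 0 < percolationExpect x M f := by
  refine lt_of_lt_of_le ?_ (Finset.single_le_sum
    (fun A _ => percolationExpect_term_nonneg hx₀.le hx₁ hf M A) (Finset.empty_mem_powerset M))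
  simpa using mul_pos (pow_pos hx₀ M.card) hf₀

-- The terms with `A ⊆ M₀` are the event that every element of `M \ M₀` is deleted.
theorem pow_card_sdiff_mul_percolationExpect_le [DecidableEq α] (hx₀ : 0 ≤ x) (hx₁ : x ≤ 1)
    (hf : ∀ A, 0 ≤ f A) {M₀ M : Finset α} (h : M₀ ⊆ M) :
    x ^ (M \ M₀).card * percolationExpect x M₀ f ≤ percolationExpect x M f := by
  rw [percolationExpect, Finset.mul_sum]
  refine le_of_eq_of_le (Finset.sum_congr rfl fun A hA => ?_)
    (Finset.sum_le_sum_of_subset_of_nonneg (Finset.powerset_mono.mpr h) fun A _ _ =>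
      percolationExpect_term_nonneg hx₀ hx₁ hf M A)
  have hA := Finset.card_le_card (Finset.mem_powerset.mp hA)
  have hcard : M.card - A.card = (M \ M₀).card + (M₀.card - A.card) := by
    have := Finset.card_sdiff_add_card_eq_card h
    omega
  rw [hcard, pow_add]
  ring

end Percolation

section SwendsenWang

noncomputable def recolorProb {q : ℕ} (A : Finset (Sym2 V)) (σ' : V → Fin q) : ℝ :=
  ∏ c : (SimpleGraph.fromEdgeSet (↑A : Set (Sym2 V))).ConnectedComponent,
    ((1 : ℝ) / q * ∑ k : Fin q, ∏ v ∈ Finset.univ.filter (fun v : V =>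
        (SimpleGraph.fromEdgeSet (↑A : Set (Sym2 V))).connectedComponentMk v = c),
      (if σ' v = k then (1 : ℝ) else 0))

theorem swKernel_eq_percolationExpect (G : SimpleGraph V) (q : ℕ) (β : ℝ) (σ σ' : V → Fin q) :
    swKernel G q β σ σ' =
      percolationExpect (Real.exp (-β)) (monoEdges G σ) fun A => recolorProb A σ' :=
  rfl

theorem recolorProb_nonneg {q : ℕ} (A : Finset (Sym2 V)) (σ' : V → Fin q) :
    0 ≤ recolorProb A σ' :=
  Finset.prod_nonneg fun _ _ => mul_nonneg (by positivity) <|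
    Finset.sum_nonneg fun _ _ => Finset.prod_nonneg fun _ _ => by split_ifs <;> norm_num

-- With no edges retained every component is a single vertex, so each factor is `1 / q`.
theorem recolorProb_empty_pos {q : ℕ} (hq : 1 ≤ q) (σ' : V → Fin q) :
    0 < recolorProb ∅ σ' := by
  refine Finset.prod_pos fun c _ => mul_pos (by positivity) ?_
  induction c using SimpleGraph.ConnectedComponent.ind with | h v₀ => ?_
  have hconst : ∏ v ∈ Finset.univ.filter (fun v : V =>
      (SimpleGraph.fromEdgeSet (↑(∅ : Finset (Sym2 V)) : Set (Sym2 V))).connectedComponentMk v =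
        (SimpleGraph.fromEdgeSet _).connectedComponentMk v₀),
      (if σ' v = σ' v₀ then (1 : ℝ) else 0) = 1 := by
    refine Finset.prod_eq_one fun v hv => ?_
    simp only [Finset.mem_filter, Finset.mem_univ, true_and, SimpleGraph.ConnectedComponent.eq,
      Finset.coe_empty, SimpleGraph.fromEdgeSet_empty, SimpleGraph.reachable_bot] at hv
    simp [hv]
  refine lt_of_lt_of_le ?_ (Finset.single_le_sum (fun k _ => Finset.prod_nonneg fun v _ => ?_)
    (Finset.mem_univ (σ' v₀)))
  · rw [hconst]
    exact one_pos
  · split_ifs <;> norm_num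

theorem swKernel_pos (G : SimpleGraph V) {q : ℕ} (hq : 1 ≤ q) {β : ℝ} (hβ : 0 ≤ β)
    (σ σ' : V → Fin q) : 0 < swKernel G q β σ σ' :=
  percolationExpect_pos (Real.exp_pos _) (Real.exp_le_one_iff.mpr (by linarith))
    (fun A => recolorProb_nonneg A σ') (recolorProb_empty_pos hq σ') _

variable {G G₀ : SimpleGraph V} {E₁ : Finset (Sym2 V)} {q : ℕ} {β : ℝ}

theorem monoEdges_mono (hsub : G₀ ≤ G) (σ : V → Fin q) : monoEdges G₀ σ ⊆ monoEdges G σ := by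
  intro e he
  simp only [monoEdges, Finset.mem_filter, Finset.mem_univ, true_and] at he ⊢
  exact ⟨SimpleGraph.edgeSet_mono hsub he.1, he.2⟩

theorem card_monoEdges_sdiff_le (hE₁ : ∀ e ∈ G.edgeSet, e ∉ G₀.edgeSet → e ∈ E₁)
    (σ : V → Fin q) : (monoEdges G σ \ monoEdges G₀ σ).card ≤ E₁.card := by
  refine Finset.card_le_card fun e he => ?_
  simp only [monoEdges, Finset.mem_sdiff, Finset.mem_filter, Finset.mem_univ, true_and] at he
  exact hE₁ e he.1.1 fun h => he.2 ⟨h, he.1.2⟩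

theorem exp_mul_swKernel_le_swKernel (hsub : G₀ ≤ G)
    (hE₁ : ∀ e ∈ G.edgeSet, e ∉ G₀.edgeSet → e ∈ E₁) (hβ : 0 ≤ β) (σ σ' : V → Fin q) :
    Real.exp (-β * E₁.card) * swKernel G₀ q β σ σ' ≤ swKernel G q β σ σ' := by
  have hx₁ : Real.exp (-β) ≤ 1 := Real.exp_le_one_iff.mpr (by linarith)
  have hpow :
      Real.exp (-β * E₁.card) ≤ Real.exp (-β) ^ (monoEdges G σ \ monoEdges G₀ σ).card := by
    rw [mul_comm, Real.exp_nat_mul]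
    exact pow_le_pow_of_le_one (Real.exp_nonneg _) hx₁ (card_monoEdges_sdiff_le hE₁ σ)
  rw [swKernel_eq_percolationExpect, swKernel_eq_percolationExpect]
  calc _ ≤ Real.exp (-β) ^ (monoEdges G σ \ monoEdges G₀ σ).card *
        percolationExpect (Real.exp (-β)) (monoEdges G₀ σ) fun A => recolorProb A σ' :=
        mul_le_mul_of_nonneg_right hpow (percolationExpect_nonneg (Real.exp_nonneg _) hx₁
          (fun A => recolorProb_nonneg A σ') _)
    _ ≤ _ := pow_card_sdiff_mul_percolationExpect_le (Real.exp_nonneg _) hx₁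
        (fun A => recolorProb_nonneg A σ') (monoEdges_mono hsub σ)

end SwendsenWang

section Gibbs

variable {Ω : Type*} [Fintype Ω] [Nonempty Ω] {w w₀ : Ω → ℝ} {c : ℝ}

theorem mul_div_sum_le_div_sum (hw : ∀ σ, 0 < w σ) (hc : ∀ σ, c * w₀ σ ≤ w σ)
    (hle : ∀ σ, w σ ≤ w₀ σ) (σ : Ω) : c * (w₀ σ / ∑ τ, w₀ τ) ≤ w σ / ∑ τ, w τ := by
  rw [← mul_div_assoc]
  exact div_le_div₀ (hw σ).le (hc σ) (Finset.sum_pos (fun τ _ => hw τ) Finset.univ_nonempty)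
    (Finset.sum_le_sum fun τ _ => hle τ)

theorem div_sum_le_inv_mul_div_sum (hw : ∀ σ, 0 < w σ) (hc₀ : 0 < c) (hc : ∀ σ, c * w₀ σ ≤ w σ)
    (hle : ∀ σ, w σ ≤ w₀ σ) (σ : Ω) : w σ / ∑ τ, w τ ≤ c⁻¹ * (w₀ σ / ∑ τ, w₀ τ) := by
  rw [inv_mul_eq_div, div_div]
  refine div_le_div₀ ((hw σ).le.trans (hle σ)) (hle σ) ?_ ?_
  · exact mul_pos (Finset.sum_pos (fun τ _ => (hw τ).trans_le (hle τ)) Finset.univ_nonempty) hc₀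
  · rw [Finset.sum_mul]
    exact Finset.sum_le_sum fun τ _ => (mul_comm _ c).trans_le (hc τ)

end Gibbs

section Potts

theorem pottsMeasure_nonneg (G : SimpleGraph V) {β : ℝ} {q : ℕ} (σ : V → Fin q) :
    0 ≤ pottsMeasure G q β σ :=
  div_nonneg (Real.exp_nonneg _) (Finset.sum_nonneg fun _ _ => Real.exp_nonneg _)

variable {G G₀ : SimpleGraph V} {E₁ : Finset (Sym2 V)} {q : ℕ}

theorem pottsH_mono (hsub : G₀ ≤ G) (σ : V → Fin q) : pottsH G₀ σ ≤ pottsH G σ := by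
  refine Finset.card_le_card fun e he => ?_
  simp only [Finset.mem_filter, Finset.mem_univ, true_and] at he ⊢
  exact ⟨SimpleGraph.edgeSet_mono hsub he.1, he.2⟩

theorem pottsH_le_add_card (hE₁ : ∀ e ∈ G.edgeSet, e ∉ G₀.edgeSet → e ∈ E₁) (σ : V → Fin q) :
    pottsH G σ ≤ pottsH G₀ σ + E₁.card := by
  refine (Finset.card_le_card fun e he => ?_).trans (Finset.card_union_le _ E₁)
  simp only [Finset.mem_filter, Finset.mem_univ, true_and] at he
  by_cases h : e ∈ G₀.edgeSet
  · exact Finset.mem_union_left _ (Finset.mem_filter.mpr ⟨Finset.mem_univ e, h, he.2⟩)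
  · exact Finset.mem_union_right _ (hE₁ e he.1 h)

theorem pottsMeasure_comparison (hsub : G₀ ≤ G)
    (hE₁ : ∀ e ∈ G.edgeSet, e ∉ G₀.edgeSet → e ∈ E₁) (hq : 1 ≤ q) {β : ℝ} (hβ : 0 ≤ β)
    (σ : V → Fin q) :
    Real.exp (-β * E₁.card) * pottsMeasure G₀ q β σ ≤ pottsMeasure G q β σ ∧
      pottsMeasure G q β σ ≤ Real.exp (β * E₁.card) * pottsMeasure G₀ q β σ := by
  have : Nonempty (Fin q) := ⟨⟨0, hq⟩⟩
  have hw : ∀ σ : V → Fin q, 0 < Real.exp (-β * pottsH G σ) := fun _ => Real.exp_pos _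
  have hle : ∀ σ : V → Fin q, Real.exp (-β * pottsH G σ) ≤ Real.exp (-β * pottsH G₀ σ) :=
    fun σ => Real.exp_le_exp.mpr <| by
      have : (pottsH G₀ σ : ℝ) ≤ pottsH G σ := by exact_mod_cast pottsH_mono hsub σ
      nlinarith
  have hc : ∀ σ : V → Fin q,
      Real.exp (-β * E₁.card) * Real.exp (-β * pottsH G₀ σ) ≤ Real.exp (-β * pottsH G σ) :=
    fun σ => by
      rw [← Real.exp_add, Real.exp_le_exp]
      have : (pottsH G σ : ℝ) ≤ pottsH G₀ σ + E₁.card := by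
        exact_mod_cast pottsH_le_add_card hE₁ σ
      nlinarith
  refine ⟨mul_div_sum_le_div_sum hw hc hle σ, ?_⟩
  have hinv : (Real.exp (-β * E₁.card))⁻¹ = Real.exp (β * E₁.card) := by
    rw [← Real.exp_neg, neg_mul, neg_neg]
  have h := div_sum_le_inv_mul_div_sum hw (Real.exp_pos _) hc hle σ
  rw [hinv] at h
  exact h

end Potts

theorem stmt_10_general {V : Type*} [Fintype V] [DecidableEq V]
    (G G₀ : SimpleGraph V) (hsub : G₀ ≤ G) (q : ℕ) (hq : 1 ≤ q) (β : ℝ) (hβ : 0 < β)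
    (E₁ : Finset (Sym2 V))
    (hE₁ : E₁ = Finset.univ.filter fun e : Sym2 V => e ∈ G.edgeSet ∧ e ∉ G₀.edgeSet) :
    (∀ σ σ' : V → Fin q,
      Real.exp (-β * E₁.card) * swKernel G₀ q β σ σ' ≤ swKernel G q β σ σ') ∧
    (∀ σ σ' : V → Fin q,
      Real.exp (-2 * β * E₁.card) * (swMat G₀ q β * swMat G₀ q β) σ σ'
        ≤ (swMat G q β * swMat G q β) σ σ') ∧
    (∀ σ : V → Fin q,
      Real.exp (-β * E₁.card) * pottsMeasure G₀ q β σ ≤ pottsMeasure G q β σ ∧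
      pottsMeasure G q β σ ≤ Real.exp (β * E₁.card) * pottsMeasure G₀ q β σ) ∧
    tauTilde (pottsMeasure G q β) (swMat G q β * swMat G q β)
      ≤ Real.exp (5 * β * E₁.card) *
          tauTilde (pottsMeasure G₀ q β) (swMat G₀ q β * swMat G₀ q β) := by
  have : Nonempty (Fin q) := ⟨⟨0, hq⟩⟩
  have hE : ∀ e ∈ G.edgeSet, e ∉ G₀.edgeSet → e ∈ E₁ := fun e he he₀ => by
    simp [hE₁, he, he₀]
  set k : ℝ := (E₁.card : ℝ)
  have hkernel := exp_mul_swKernel_le_swKernel (q := q) hsub hE hβ.le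
  have hsq : Real.exp (-2 * β * k) = Real.exp (-β * k) ^ 2 := by
    rw [← Real.exp_nat_mul]
    ring_nf
  have hstep2 : ∀ σ σ' : V → Fin q, Real.exp (-2 * β * k) * (swMat G₀ q β * swMat G₀ q β) σ σ'
      ≤ (swMat G q β * swMat G q β) σ σ' := fun σ σ' => hsq ▸
    Matrix.sq_mul_mul_apply_le (Real.exp_nonneg _)
      (fun s t => (swKernel_pos G₀ hq hβ.le s t).le) hkernel σ σ'
  have hμ := pottsMeasure_comparison (β := β) hsub hE hq hβ.le
  have hP : ∀ H : SimpleGraph V, ∀ s t, 0 < (swMat H q β * swMat H q β) s t := fun H =>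
    Matrix.mul_apply_pos (swKernel_pos H hq hβ.le) (swKernel_pos H hq hβ.le)
  refine ⟨hkernel, hstep2, hμ, ?_⟩
  calc _ ≤ Real.exp (β * k) ^ 2 / (Real.exp (-β * k) * Real.exp (-2 * β * k)) *
        tauTilde (pottsMeasure G₀ q β) (swMat G₀ q β * swMat G₀ q β) :=
        tauTilde_le_of_comparison (Real.exp_pos _) (Real.exp_pos _) (pottsMeasure_nonneg G)
          (pottsMeasure_nonneg G₀) (fun s t => (hP G s t).le) (hP G₀)
          (fun σ => (hμ σ).2) (fun σ => (hμ σ).1) hstep2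
    _ = _ := by
        rw [← Real.exp_nat_mul, ← Real.exp_add, ← Real.exp_sub]
        ring_nf

/-- comparison of the Swendsen–Wang chain on `G` and on a spanning subgraph
`G₀`, with `E₁ = E \ E₀`: pointwise kernel bounds, two-step bounds, Gibbs measure
comparison, and the resulting inverse-gap bound `τ̃(P²_G) ≤ e^{5β|E₁|}·τ̃(P²_{G₀})`. -/
theorem stmt_10 {V : Type*} [Fintype V] [DecidableEq V] [Nonempty V]
    (G G₀ : SimpleGraph V) (hsub : G₀ ≤ G) (q : ℕ) (hq : 1 ≤ q) (β : ℝ) (hβ : 0 < β)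
    (E₁ : Finset (Sym2 V))
    (hE₁ : E₁ = Finset.univ.filter fun e : Sym2 V => e ∈ G.edgeSet ∧ e ∉ G₀.edgeSet) :
    (∀ σ σ' : V → Fin q,
      Real.exp (-β * E₁.card) * swKernel G₀ q β σ σ' ≤ swKernel G q β σ σ') ∧
    (∀ σ σ' : V → Fin q,
      Real.exp (-2 * β * E₁.card) * (swMat G₀ q β * swMat G₀ q β) σ σ'
        ≤ (swMat G q β * swMat G q β) σ σ') ∧
    (∀ σ : V → Fin q,
      Real.exp (-β * E₁.card) * pottsMeasure G₀ q β σ ≤ pottsMeasure G q β σ ∧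
      pottsMeasure G q β σ ≤ Real.exp (β * E₁.card) * pottsMeasure G₀ q β σ) ∧
    tauTilde (pottsMeasure G q β) (swMat G q β * swMat G q β)
      ≤ Real.exp (5 * β * E₁.card) *
          tauTilde (pottsMeasure G₀ q β) (swMat G₀ q β * swMat G₀ q β) :=
  stmt_10_general G G₀ hsub q hq β hβ E₁ hE₁
end

section
/- In the d-dimensional half-integer torus, if X* is an orientable closed surface (a set of (d−1)-cells with empty ℤ₂-boundary) with winding vector N(X*) = 0 ∈ {0,1}^d, then X* is the ℤ₂-boundary of a region: there exists a set C of d-cells whose boundary is X*. Moreover, if X* is connected (any two facets joined by a chain of facets sharing (d−2)-cells) and is dual to a minimal cutset, then the complement of X* in the torus has exactly two connected components. -/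
/-!
Record the edges of the torus graph that cross `X` as a `ℤ₂`-valued `1`-cochain. Closedness
of `X` says that the four facets around each `(d-2)`-cell contribute an even number, which
makes the cochain a cocycle; the vanishing winding vector says that its sum along every
fundamental loop is zero. Integrating it along staircase paths, one coordinate at a time,
then gives a potential `f` whose coboundary is the cochain, and the `d`-cells where `f = 1`
have `ℤ₂`-boundary `X`.

The second part is graph theory: if `D` is a minimal cutset of a connected graph, putting
back one edge `ab` of `D` reconnects the graph, so every vertex reaches `a` or `b` without
using `D`, and `a`, `b` lie in different components.
-/

open Finset
open scoped Classical

/-- A `k`-cell of the discrete torus `(ℤ/nℤ)^d`: a base point together with the set of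
(at most `d`) directions it spans; the cardinality of the direction set is the dimension
of the cell. -/
abbrev Cell (d n : ℕ) := (Fin d → ZMod n) × Finset (Fin d)

/-- The `i`-th coordinate unit vector. -/
def unitVec {d n : ℕ} (i : Fin d) : Fin d → ZMod n := fun j => if j = i then 1 else 0

/-- The `2k` cells of dimension `k-1` in the boundary of a `k`-cell. -/
def cellBd {d n : ℕ} (c : Cell d n) : Finset (Cell d n) :=
  c.2.biUnion fun i => {(c.1, c.2.erase i), (c.1 + unitVec i, c.2.erase i)}

/-- The `ℤ₂`-boundary of a set `K` of cells: the cells lying in the boundary of an odd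
number of members of `K`. -/
noncomputable def z2bd {d n : ℕ} [NeZero n] (K : Finset (Cell d n)) :
    Finset (Cell d n) :=
  Finset.univ.filter fun f => Odd ((K.filter fun c => f ∈ cellBd c).card)

/-- The nearest-neighbor torus graph on `(ℤ/nℤ)^d`. -/
def torusGraph (n d : ℕ) : SimpleGraph (Fin d → ZMod n) where
  Adj x y := x ≠ y ∧ ∃ i, (∀ j, j ≠ i → x j = y j) ∧ (x = y + unitVec i ∨ y = x + unitVec i)
  symm := ⟨by
    rintro x y ⟨hxy, i, h1, h2⟩
    exact ⟨hxy.symm, i, fun j hj => (h1 j hj).symm, h2.symm⟩⟩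
  loopless := ⟨fun x h => h.1 rfl⟩

namespace SimpleGraph

variable {V : Type*} {G : SimpleGraph V}

lemma Walk.reachable_or_reachable_deleteEdges_singleton {a b u v : V} (p : G.Walk u v)
    (hu : (G.deleteEdges {s(a, b)}).Reachable u a ∨ (G.deleteEdges {s(a, b)}).Reachable u b) :
    (G.deleteEdges {s(a, b)}).Reachable v a ∨ (G.deleteEdges {s(a, b)}).Reachable v b := by
  induction p with
  | nil => exact hu
  | @cons u w v huw p ih =>
    apply ih
    by_cases he : s(u, w) = s(a, b)
    · rcases Sym2.eq_iff.1 he with ⟨-, rfl⟩ | ⟨-, rfl⟩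
      exacts [Or.inr .rfl, Or.inl .rfl]
    · have hwu : (G.deleteEdges {s(a, b)}).Reachable w u :=
        (deleteEdges_adj.2 ⟨huw, he⟩).symm.reachable
      exact hu.imp hwu.trans hwu.trans

lemma Connected.card_connectedComponent_deleteEdges_eq_two (hG : G.Connected)
    {D : Set (Sym2 V)} (hdis : ¬ (G.deleteEdges D).Connected)
    (hmin : ∀ D' ⊂ D, (G.deleteEdges D').Connected) :
    Nat.card (G.deleteEdges D).ConnectedComponent = 2 := by
  obtain ⟨e, he⟩ : D.Nonempty := Set.nonempty_iff_ne_empty.2 fun h => hdis (by simpa [h])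
  induction e using Sym2.ind with | _ a b => ?_
  have hG₁ := hmin _ (Set.sdiff_singleton_ssubset.2 he)
  have hH : G.deleteEdges D = (G.deleteEdges (D \ {s(a, b)})).deleteEdges {s(a, b)} := by
    rw [deleteEdges_deleteEdges, Set.sdiff_union_of_subset (Set.singleton_subset_iff.2 he)]
  have hreach : ∀ v, (G.deleteEdges D).Reachable v a ∨ (G.deleteEdges D).Reachable v b := by
    intro v
    rw [hH]
    exact (hG₁.preconnected a v).some.reachable_or_reachable_deleteEdges_singleton (Or.inl .rfl)
  refine Nat.card_eq_two_iff.2 ⟨(G.deleteEdges D).connectedComponentMk a,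
    (G.deleteEdges D).connectedComponentMk b, fun hab => hdis ?_,
    Set.eq_univ_of_forall fun c => ?_⟩
  · have hab := ConnectedComponent.exact hab
    refine (connected_iff_exists_forall_reachable _).2 ⟨a, fun v => ?_⟩
    exact ((hreach v).elim id fun h => h.trans hab.symm).symm
  · induction c using ConnectedComponent.ind with | _ v => ?_
    exact (hreach v).imp ConnectedComponent.sound ConnectedComponent.sound

end SimpleGraph

section Torus

variable {d n : ℕ}

lemma nsmul_unitVec (k : ℕ) (i : Fin d) :
    (k • unitVec i : Fin d → ZMod n) = Pi.single i (k : ZMod n) := by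
  funext j
  by_cases h : j = i <;> simp [unitVec, h]

lemma add_unitVec_apply_of_ne (v : Fin d → ZMod n) {i j : Fin d} (h : j ≠ i) :
    (v + unitVec i : Fin d → ZMod n) j = v j := by
  simp [unitVec, h]

lemma add_unitVec_apply_self (v : Fin d → ZMod n) (i : Fin d) :
    (v + unitVec i : Fin d → ZMod n) i = v i + 1 := by
  simp [unitVec]

lemma piecewise_add_unitVec_of_mem {s : Finset (Fin d)} {i : Fin d} (hi : i ∈ s)
    (v : Fin d → ZMod n) : s.piecewise (v + unitVec i) 0 = s.piecewise v 0 + unitVec i := by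
  funext j
  by_cases hj : j ∈ s <;> by_cases h : j = i <;> simp_all [unitVec]

lemma piecewise_add_unitVec_of_notMem {s : Finset (Fin d)} {i : Fin d} (hi : i ∉ s)
    (v : Fin d → ZMod n) : s.piecewise (v + unitVec i) 0 = s.piecewise v 0 := by
  funext j
  by_cases hj : j ∈ s
  · simp [hj, add_unitVec_apply_of_ne v (ne_of_mem_of_not_mem hj hi)]
  · simp [hj]

lemma piecewise_insert_zero [NeZero n] {s : Finset (Fin d)} {a : Fin d} (ha : a ∉ s)
    (v : Fin d → ZMod n) :
    (insert a s).piecewise v 0 = s.piecewise v 0 + (v a).val • unitVec a := by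
  rw [nsmul_unitVec]
  funext j
  by_cases h : j = a
  · subst h; simp [ha]
  · by_cases hj : j ∈ s <;> simp [h, hj]

lemma torusGraph_reachable_add_unitVec (v : Fin d → ZMod n) (i : Fin d) :
    (torusGraph n d).Reachable v (v + unitVec i) := by
  by_cases h : v = v + unitVec i
  · exact h ▸ .rfl
  · exact SimpleGraph.Adj.reachable
      ⟨h, i, fun j hj => (add_unitVec_apply_of_ne v hj).symm, Or.inr rfl⟩

lemma torusGraph_reachable_add_nsmul (v : Fin d → ZMod n) (i : Fin d) (k : ℕ) :
    (torusGraph n d).Reachable v (v + k • unitVec i) := by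
  induction k with
  | zero => simp
  | succ k ih =>
    rw [succ_nsmul, ← add_assoc]
    exact ih.trans (torusGraph_reachable_add_unitVec _ i)

lemma torusGraph_connected [NeZero n] : (torusGraph n d).Connected := by
  have hreach : ∀ (s : Finset (Fin d)) (v : Fin d → ZMod n),
      (torusGraph n d).Reachable 0 (s.piecewise v 0) := by
    intro s v
    induction s using Finset.induction with
    | empty => simp
    | insert a s ha ih =>
      rw [piecewise_insert_zero ha]
      exact ih.trans (torusGraph_reachable_add_nsmul _ a _)
  exact (SimpleGraph.connected_iff_exists_forall_reachable _).2
    ⟨0, fun v => by simpa using hreach univ v⟩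

lemma sum_range_val_add_one {A : Type*} [AddCommMonoid A] [NeZero n] (φ : ℕ → A)
    (hφ : ∑ k ∈ range n, φ k = 0) (a : ZMod n) :
    ∑ k ∈ range (a + 1).val, φ k = ∑ k ∈ range a.val, φ k + φ a.val := by
  have hval : (a + 1).val = (a.val + 1) % n := by
    rw [← ZMod.val_natCast, Nat.cast_add, ZMod.natCast_zmod_val, Nat.cast_one]
  rcases (show a.val + 1 ≤ n from a.val_lt).eq_or_lt with h | h
  · rw [hval, h, Nat.mod_self, ← sum_range_succ, h, hφ, sum_range_zero]
  · rw [hval, Nat.mod_eq_of_lt h, sum_range_succ]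

section Potential

variable {A : Type*} [AddCommGroup A]

lemma sum_range_add_unitVec_sub (g : (Fin d → ZMod n) → Fin d → A)
    (hcoc : ∀ v i j, g v i + g (v + unitVec i) j = g v j + g (v + unitVec j) i)
    (w : Fin d → ZMod n) (i j : Fin d) (k : ℕ) :
    ∑ t ∈ range k, g (w + unitVec j + t • unitVec i) i -
      ∑ t ∈ range k, g (w + t • unitVec i) i =
      g (w + k • unitVec i) j - g w j := by
  rw [← sum_sub_distrib]
  convert sum_range_sub (fun t => g (w + t • unitVec i) j) k using 2 with t
  · have hsquare := (hcoc (w + t • unitVec i) i j).symm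
    rw [succ_nsmul, ← add_assoc, add_right_comm w, sub_eq_sub_iff_add_eq_add, add_comm, hsquare,
      add_comm]
  · simp

lemma exists_partial_potential [NeZero n] (g : (Fin d → ZMod n) → Fin d → A)
    (hcoc : ∀ v i j, g v i + g (v + unitVec i) j = g v j + g (v + unitVec j) i)
    (hloop : ∀ v i, ∑ k ∈ range n, g (v + k • unitVec i) i = 0) (s : Finset (Fin d)) :
    ∃ P : (Fin d → ZMod n) → A, ∀ v i,
      P (v + unitVec i) - P v = if i ∈ s then g (s.piecewise v 0) i else 0 := by
  -- `P v` sums `g` along a staircase path from `0` to `s.piecewise v 0`.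
  induction s using Finset.induction with
  | empty => exact ⟨0, by simp⟩
  | insert a s ha ih =>
    obtain ⟨P, hP⟩ := ih
    refine ⟨fun v => P v + ∑ k ∈ range (v a).val, g (s.piecewise v 0 + k • unitVec a) a,
      fun v i => ?_⟩
    rw [piecewise_insert_zero ha, add_sub_add_comm, hP]
    by_cases hi : i ∈ s
    · have hai : a ≠ i := ne_of_mem_of_not_mem hi ha |>.symm
      rw [piecewise_add_unitVec_of_mem hi, add_unitVec_apply_of_ne v hai,
        sum_range_add_unitVec_sub g hcoc, if_pos hi, if_pos (mem_insert_of_mem hi)]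
      abel
    rw [piecewise_add_unitVec_of_notMem hi, if_neg hi, zero_add]
    by_cases hia : i = a
    · subst hia
      rw [add_unitVec_apply_self, sum_range_val_add_one _ (hloop _ i),
        if_pos (mem_insert_self _ _)]
      abel
    · rw [add_unitVec_apply_of_ne v (Ne.symm hia), sub_self, if_neg (by simp [hi, hia])]

theorem exists_potential [NeZero n] (g : (Fin d → ZMod n) → Fin d → A)
    (hcoc : ∀ v i j, g v i + g (v + unitVec i) j = g v j + g (v + unitVec j) i)
    (hloop : ∀ v i, ∑ k ∈ range n, g (v + k • unitVec i) i = 0) :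
    ∃ f : (Fin d → ZMod n) → A, ∀ v i, f (v + unitVec i) = f v + g v i := by
  obtain ⟨f, hf⟩ := exists_partial_potential g hcoc hloop univ
  refine ⟨f, fun v i => ?_⟩
  rw [← sub_eq_iff_eq_add', hf, if_pos (mem_univ i), piecewise_univ]

end Potential

lemma mem_cellBd {q p : Fin d → ZMod n} {S T : Finset (Fin d)} :
    (q, S) ∈ cellBd (p, T) ↔ ∃ i ∈ T, S = T.erase i ∧ (q = p ∨ q = p + unitVec i) := by
  simp only [cellBd, mem_biUnion, mem_insert, mem_singleton, Prod.ext_iff]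
  grind

lemma exists_eq_univ_erase {S : Finset (Fin d)} (hd : 1 ≤ d) (hS : S.card = d - 1) :
    ∃ i, S = univ.erase i := by
  obtain ⟨i, hi⟩ : ∃ i, Sᶜ = {i} := card_eq_one.1 (by simp [card_compl, hS]; omega)
  exact ⟨i, by rw [← compl_compl S, hi, compl_singleton]⟩

lemma mem_cellBd_cube_iff {q p : Fin d → ZMod n} {i : Fin d} :
    (q, univ.erase i) ∈ cellBd (p, univ) ↔ p = q ∨ p = q - unitVec i := by
  simp only [mem_cellBd, mem_univ, true_and, erase_inj univ (mem_univ _), eq_sub_iff_add_eq]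
  grind

lemma unitVec_ne_zero [Fact (1 < n)] (i : Fin d) : (unitVec i : Fin d → ZMod n) ≠ 0 :=
  fun h => one_ne_zero (α := ZMod n) (by simpa [unitVec] using congrFun h i)

def cubeSupport [NeZero n] (f : (Fin d → ZMod n) → ZMod 2) : Finset (Cell d n) :=
  univ.filter fun c => c.2 = univ ∧ f c.1 = 1

lemma mem_z2bd_cubeSupport_iff [NeZero n] [Fact (1 < n)] (f : (Fin d → ZMod n) → ZMod 2)
    (q : Fin d → ZMod n) (i : Fin d) :
    (q, univ.erase i) ∈ z2bd (cubeSupport f) ↔ f q ≠ f (q - unitVec i) := by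
  have hfilter : (cubeSupport f).filter (fun c => (q, univ.erase i) ∈ cellBd c) =
      ({(q, univ), (q - unitVec i, univ)} : Finset (Cell d n)).filter (fun c => f c.1 = 1) := by
    ext ⟨p, T⟩
    by_cases hT : T = univ
    · subst hT
      simp [cubeSupport, mem_cellBd_cube_iff, and_comm]
    · simp [cubeSupport, hT]
  have hne : q ≠ q - unitVec i := fun h => unitVec_ne_zero i (sub_eq_self.1 h.symm)
  simp only [z2bd, mem_filter, mem_univ, true_and, hfilter]
  have hvals : ∀ a : ZMod 2, a = 0 ∨ a = 1 := by decide
  rcases hvals (f q) with ha | ha <;> rcases hvals (f (q - unitVec i)) with hb | hb <;>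
    simp [filter_insert, filter_singleton, ha, hb, hne]

lemma exists_eq_univ_erase_of_mem_z2bd [NeZero n] {K : Finset (Cell d n)}
    (hK : ∀ c ∈ K, c.2 = univ) {q : Fin d → ZMod n} {S : Finset (Fin d)}
    (h : (q, S) ∈ z2bd K) : ∃ i, S = univ.erase i := by
  simp only [z2bd, mem_filter, mem_univ, true_and] at h
  obtain ⟨⟨p, T⟩, hc⟩ := card_pos.1 h.pos
  rw [mem_filter] at hc
  obtain ⟨i, -, hS, -⟩ := mem_cellBd.1 hc.2
  exact ⟨i, hK _ hc.1 ▸ hS⟩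

/-- The facet `(v + eᵢ, univ.erase i)` is the one shared by the `d`-cells based at `v` and
`v + eᵢ`, so `crossing X v i` records whether the edge between them crosses `X`. -/
noncomputable def crossing [NeZero n] (X : Finset (Cell d n)) (v : Fin d → ZMod n) (i : Fin d) :
    ZMod 2 :=
  if (v + unitVec i, univ.erase i) ∈ X then 1 else 0

lemma card_filter_mem_line [NeZero n] (X : Finset (Cell d n)) (p : Fin d → ZMod n) (i : Fin d) :
    #{k ∈ range n | (p + k • unitVec i, univ.erase i) ∈ X} =
      #(X.filter fun c => c.2 = univ.erase i ∧ ∀ j, j ≠ i → c.1 j = p j) := by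
  refine card_bij (fun k _ => (p + k • unitVec i, univ.erase i)) ?_ ?_ ?_
  · intro k hk
    refine mem_filter.2 ⟨(mem_filter.1 hk).2, rfl, fun j hj => ?_⟩
    simp [nsmul_unitVec k i, hj]
  · intro k hk k' hk' h
    simp only [mem_filter, mem_range] at hk hk'
    have := congrFun (congrArg Prod.fst h) i
    simp only [nsmul_unitVec, Pi.add_apply, Pi.single_eq_same, add_right_inj] at this
    rw [← ZMod.val_cast_of_lt hk.1, ← ZMod.val_cast_of_lt hk'.1, this]
  · rintro ⟨q, S⟩ hc
    simp only [mem_filter] at hc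
    obtain ⟨hcX, rfl, hq⟩ := hc
    have hline : p + (q i - p i).val • unitVec i = q := by
      rw [nsmul_unitVec, ZMod.natCast_zmod_val]
      funext j
      by_cases hj : j = i
      · subst hj; simp
      · simp [hj, hq j hj]
    exact ⟨(q i - p i).val, mem_filter.2 ⟨mem_range.2 (ZMod.val_lt _), by rwa [hline]⟩,
      by rw [hline]⟩

lemma sum_crossing_line [NeZero n] (X : Finset (Cell d n))
    (hwind : ∀ (p : Fin d → ZMod n) (i : Fin d),
      Even ((X.filter fun c => c.2 = univ.erase i ∧ ∀ j, j ≠ i → c.1 j = p j).card))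
    (v : Fin d → ZMod n) (i : Fin d) :
    ∑ k ∈ range n, crossing X (v + k • unitVec i) i = 0 := by
  simp only [crossing, add_right_comm v]
  rw [sum_boole, card_filter_mem_line, ZMod.natCast_eq_zero_iff_even]
  exact hwind _ i

lemma erase_erase_univ_eq_iff {i j m k : Fin d} (hij : i ≠ j) :
    (univ.erase i).erase j = (univ.erase m).erase k ↔
      (m = i ∧ k = j) ∨ (m = j ∧ k = i) := by
  constructor
  · intro h
    have hmem : ∀ x, x ∈ (univ.erase i).erase j ↔ x ∈ (univ.erase m).erase k := by simp [h]
    simp only [mem_erase, mem_univ, and_true] at hmem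
    have := hmem i; have := hmem j; have := hmem m; have := hmem k
    grind
  · rintro (⟨rfl, rfl⟩ | ⟨rfl, rfl⟩)
    exacts [rfl, erase_right_comm]

lemma mem_cellBd_facet_iff {i j m : Fin d} (hij : i ≠ j) {w p : Fin d → ZMod n} :
    (w, (univ.erase i).erase j) ∈ cellBd (p, univ.erase m) ↔
      (m = i ∧ (p = w ∨ p + unitVec j = w)) ∨ (m = j ∧ (p = w ∨ p + unitVec i = w)) := by
  rw [mem_cellBd]
  constructor
  · rintro ⟨k, -, hS, hw⟩
    rcases (erase_erase_univ_eq_iff hij).1 hS with ⟨rfl, rfl⟩ | ⟨rfl, rfl⟩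
    all_goals grind
  · rintro (⟨rfl, hp⟩ | ⟨rfl, hp⟩)
    · exact ⟨j, by simp [hij.symm], rfl, by grind⟩
    · exact ⟨i, by simp [hij], erase_right_comm, by grind⟩

lemma crossing_cocycle [NeZero n] [Fact (1 < n)] (hd : 1 ≤ d) (X : Finset (Cell d n))
    (hfacet : ∀ c ∈ X, c.2.card = d - 1) (hclosed : z2bd X = ∅)
    (v : Fin d → ZMod n) (i j : Fin d) :
    crossing X v i + crossing X (v + unitVec i) j =
      crossing X v j + crossing X (v + unitVec j) i := by
  rcases eq_or_ne i j with rfl | hij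
  · rfl
  set w := v + unitVec i + unitVec j
  set F : Finset (Cell d n) := {(v + unitVec i, univ.erase i), (w, univ.erase j),
    (v + unitVec j, univ.erase j), (w, univ.erase i)}
  have hfilter : X.filter (fun c => (w, (univ.erase i).erase j) ∈ cellBd c) =
      F.filter (· ∈ X) := by
    ext ⟨p, T⟩
    by_cases hX : (p, T) ∈ X
    · obtain ⟨m, rfl⟩ := exists_eq_univ_erase hd (hfacet _ hX)
      simp only [mem_filter, hX, true_and, and_true, mem_cellBd_facet_iff hij, F, mem_insert,
        mem_singleton, Prod.ext_iff, erase_inj univ (mem_univ _), w]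
      grind
    · simp [hX]
  have hdistinct : ((v + unitVec i, univ.erase i) : Cell d n) ∉
      ({(w, univ.erase j), (v + unitVec j, univ.erase j), (w, univ.erase i)} : Finset _) ∧
      ((w, univ.erase j) : Cell d n) ∉
        ({(v + unitVec j, univ.erase j), (w, univ.erase i)} : Finset _) ∧
      ((v + unitVec j, univ.erase j) : Cell d n) ≠ (w, univ.erase i) := by
    simp [Prod.ext_iff, erase_inj univ (mem_univ _), hij, hij.symm, w, add_assoc,
      unitVec_ne_zero]
  have heven : ((F.filter (· ∈ X)).card : ZMod 2) = 0 := by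
    rw [← hfilter, ZMod.natCast_eq_zero_iff_even, ← Nat.not_odd_iff_even]
    intro hodd
    have hmem : (w, (univ.erase i).erase j) ∈ z2bd X := mem_filter.2 ⟨mem_univ _, hodd⟩
    simp [hclosed] at hmem
  rw [natCast_card_filter, sum_insert hdistinct.1, sum_insert hdistinct.2.1,
    sum_pair hdistinct.2.2] at heven
  have hw : v + unitVec j + unitVec i = w := add_right_comm _ _ _
  simp only [crossing, hw]
  have hchar2 : ∀ a b c e : ZMod 2, a + (b + (c + e)) = 0 → a + b = c + e := by decide
  exact hchar2 _ _ _ _ heven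

lemma z2bd_cubeSupport_eq [NeZero n] [Fact (1 < n)] (hd : 1 ≤ d) (X : Finset (Cell d n))
    (hfacet : ∀ c ∈ X, c.2.card = d - 1) (f : (Fin d → ZMod n) → ZMod 2)
    (hf : ∀ v i, f (v + unitVec i) = f v + crossing X v i) :
    z2bd (cubeSupport f) = X := by
  ext ⟨q, S⟩
  by_cases hS : ∃ i, S = univ.erase i
  · obtain ⟨i, rfl⟩ := hS
    have hq := hf (q - unitVec i) i
    rw [sub_add_cancel] at hq
    rw [mem_z2bd_cubeSupport_iff, hq]
    by_cases hX : (q, univ.erase i) ∈ X <;> simp [crossing, hX]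
  · exact iff_of_false
      (fun h => hS (exists_eq_univ_erase_of_mem_z2bd (by simp [cubeSupport]) h))
      (fun h => hS (exists_eq_univ_erase hd (hfacet _ h)))

end Torus

/-- in the `d`-dimensional (half-integer) torus, a closed surface (a set of
`(d-1)`-cells with empty `ℤ₂`-boundary) whose `ℤ₂`-winding vector vanishes (every
fundamental lattice loop crosses it an even number of times) bounds: it is the
`ℤ₂`-boundary of a set of `d`-cells.  Moreover, if the surface is connected (facets glued
along shared `(d-2)`-cells) and its dual edge set is a minimal cutset of the torus graph,
then its complement has exactly two connected components. -/
theorem stmt_15 (d n : ℕ) [NeZero n] (hd : 1 ≤ d)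
    (X : Finset (Cell d n))
    (hfacet : ∀ c ∈ X, c.2.card = d - 1)
    (hclosed : z2bd X = ∅)
    (hwind : ∀ (p : Fin d → ZMod n) (i : Fin d),
      Even ((X.filter fun c =>
        c.2 = Finset.univ.erase i ∧ ∀ j, j ≠ i → c.1 j = p j).card)) :
    (∃ Cset : Finset (Cell d n),
      (∀ c ∈ Cset, c.2 = Finset.univ) ∧ z2bd Cset = X) ∧
    (∀ Ddual : Set (Sym2 (Fin d → ZMod n)),
      Ddual = {e | ∃ c ∈ X, ∃ i, i ∉ c.2 ∧ e = s(c.1, c.1 + unitVec i)} →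
      -- X is connected: any two facets of X are joined by a chain of facets of X
      -- successively sharing a boundary (d-2)-cell
      (∀ a ∈ X, ∀ b ∈ X, Relation.ReflTransGen
        (fun u v : Cell d n => u ∈ X ∧ v ∈ X ∧ u ≠ v ∧ (cellBd u ∩ cellBd v).Nonempty)
        a b) →
      -- the dual edge set is a minimal cutset of the torus graph
      ¬ ((torusGraph n d).deleteEdges Ddual).Connected →
      (∀ D' ⊂ Ddual, ((torusGraph n d).deleteEdges D').Connected) →
      Nat.card ((torusGraph n d).deleteEdges Ddual).ConnectedComponent = 2) := by
  refine ⟨?_, fun _ _ _ hdis hmin =>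
    torusGraph_connected.card_connectedComponent_deleteEdges_eq_two hdis hmin⟩
  rcases (Nat.one_le_iff_ne_zero.2 (NeZero.ne n)).eq_or_lt with rfl | hn
  · -- on the one-point torus every facet is crossed once by the loop of length one through it
    have hX : X = ∅ := by
      refine eq_empty_of_forall_notMem fun ⟨q, S⟩ hc => ?_
      obtain ⟨i, rfl⟩ := exists_eq_univ_erase hd (hfacet _ hc)
      have := sum_crossing_line X hwind (q - unitVec i) i
      rw [sum_range_one, zero_smul, add_zero] at this
      simp [crossing, hc] at this
    exact ⟨∅, by simp, by simp [hX, z2bd]⟩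
  · have : Fact (1 < n) := ⟨hn⟩
    obtain ⟨f, hf⟩ := exists_potential (crossing X) (crossing_cocycle hd X hfacet hclosed)
      (sum_crossing_line X hwind)
    exact ⟨cubeSupport f, by simp [cubeSupport], z2bd_cubeSupport_eq hd X hfacet f hf⟩
end
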